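/- For all n ≥ 1, there exists a word over the alphabet {1,...,n+1} of length n(n+1)/2 that contains, for every permutation of length n, a subsequence order-isomorphic to that permutation. -/

import Mathlib

/-!
A word with distinct consecutive letters embeds greedily into the zigzag word `W` on `{1, …, n+1}`:
its first letter `a` goes into the first run of the parity of `a`, and each next letter `b` stays in
the current run if it comes later there (cost 0), moves to the next run if its parity differs
(cost 1), and to the run after that otherwise (cost 2). Adding `1` to all letters keeps parities equal
or unequal but reverses the direction of every same-parity step, so it swaps the costs 0 and 2 and
moves the first run from 1 to 2 or back. Hence for a permutation `p` of length `n` the numbers of runs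
used by `p` and by `p + 1` add up to `2n + 1`, so one of these two words, both order-isomorphic to
`p`, embeds into the `n` runs of `W`.
-/

/-- `w` is a permutation of length `n`: a word on `{1,...,n}` with each letter occurring once. -/
def IsPermWord (n : Nat) (w : List Nat) : Prop :=
  w.length = n ∧ w.Nodup ∧ ∀ x ∈ w, 1 ≤ x ∧ x ≤ n

/-- Two words of the same length are order-isomorphic. -/
def OrdIso (u v : List Nat) : Prop :=
  u.length = v.length ∧ ∀ i j, i < u.length → j < u.length →
    (u.getD i 0 < u.getD j 0 ↔ v.getD i 0 < v.getD j 0)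

theorem List.Pairwise.filter_not_rel_eq_cons {α : Type*} {r : α → α → Prop} [Std.Asymm r]
    [DecidableRel r] {l : List α} (hl : l.Pairwise r) {a : α} (ha : a ∈ l) :
    l.filter (fun b => ¬ r b a) = a :: l.filter (r a ·) := by
  induction l with
  | nil => cases ha
  | cons c l ih =>
    obtain ⟨hc, hl⟩ := List.pairwise_cons.1 hl
    have hirr : ¬ r a a := fun h => Std.Asymm.asymm a a h h
    rcases List.mem_cons.1 ha with rfl | ha
    · have hafter : ∀ b ∈ l, r a b ∧ ¬ r b a := fun b hb => ⟨hc b hb, Std.Asymm.asymm _ _ (hc b hb)⟩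
      rw [List.filter_cons_of_pos (by simpa using hirr), List.filter_cons_of_neg (by simpa using hirr),
        List.filter_eq_self.2 (by simpa using fun b hb => (hafter b hb).2),
        List.filter_eq_self.2 (by simpa using fun b hb => (hafter b hb).1)]
    · have hca := hc a ha
      rw [List.filter_cons_of_neg (by simpa using hca),
        List.filter_cons_of_neg (by simpa using Std.Asymm.asymm _ _ hca), ih hl ha]

namespace Zigzag

open List

def zigzagRun (N j : ℕ) : List ℕ :=
  let letters := (range' 1 N).filter (· % 2 = j % 2)
  if j % 2 = 1 then letters else letters.reverse

def runs (N j k : ℕ) : List ℕ := (range' j k).flatMap (zigzagRun N)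

def zigzagWord (n : ℕ) : List ℕ := runs (n + 1) 1 n

def RunLT (j a b : ℕ) : Prop := if j % 2 = 1 then a < b else b < a

instance (j : ℕ) : DecidableRel (RunLT j) := fun a b => by unfold RunLT; infer_instance

instance (j : ℕ) : Std.Asymm (RunLT j) where
  asymm a b := by unfold RunLT; split_ifs <;> omega

def runFrom (N j a : ℕ) : List ℕ := (zigzagRun N j).filter (fun b => ¬ RunLT j b a)

theorem mem_zigzagRun {N j a : ℕ} : a ∈ zigzagRun N j ↔ 1 ≤ a ∧ a ≤ N ∧ a % 2 = j % 2 := by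
  unfold zigzagRun
  split_ifs <;> simp [mem_range'_1] <;> omega

theorem pairwise_zigzagRun (N j : ℕ) : (zigzagRun N j).Pairwise (RunLT j) := by
  have h := (pairwise_lt_range' (s := 1) (n := N)).filter (· % 2 = j % 2 : ℕ → Bool)
  unfold zigzagRun RunLT
  split_ifs with hj
  · simpa [hj] using h
  · simpa [hj, pairwise_reverse] using h

theorem length_zigzagRun (N j : ℕ) : (zigzagRun N j).length = (N + j % 2) / 2 := by
  suffices h : ∀ N, ((range' 1 N).filter (· % 2 = j % 2 : ℕ → Bool)).length = (N + j % 2) / 2 by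
    unfold zigzagRun; split_ifs <;> simp [h]
  intro N
  induction N with
  | zero => simp
  | succ N ih =>
    rw [range'_1_concat, filter_append, length_append, ih]
    by_cases h : (1 + N) % 2 = j % 2 <;> simp [h] <;> omega

theorem runFrom_eq_cons {N j a : ℕ} (ha : a ∈ zigzagRun N j) :
    runFrom N j a = a :: (zigzagRun N j).filter (RunLT j a ·) :=
  (pairwise_zigzagRun N j).filter_not_rel_eq_cons ha

theorem runFrom_sublist_filter {N j a b : ℕ} (hab : RunLT j a b) :
    runFrom N j b <+ (zigzagRun N j).filter (RunLT j a ·) :=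
  monotone_filter_right _ fun c => by
    unfold RunLT at hab ⊢; split_ifs at hab ⊢ <;> simp <;> omega

theorem runs_succ (N j k : ℕ) : runs N j (k + 1) = zigzagRun N j ++ runs N (j + 1) k := by
  rw [runs, range'_succ, flatMap_cons, runs]

theorem runs_succ_sublist (N j k : ℕ) : runs N (j + 1) k <+ runs N j (k + 1) := by
  rw [runs_succ]; exact sublist_append_right _ _

theorem runFrom_append_runs_sublist (N j a k : ℕ) :
    runFrom N j a ++ runs N (j + 1) k <+ runs N j (k + 1) := by
  rw [runs_succ]; exact filter_sublist.append_right _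

theorem runs_add_sublist (N j d k : ℕ) : runs N (j + d) k <+ runs N j (d + k) := by
  induction d generalizing k with
  | zero => simp
  | succ d ih =>
    rw [show d + 1 + k = d + (k + 1) by omega]
    exact (runs_succ_sublist N (j + d) k).trans (ih (k + 1))

theorem length_runs_one (N k : ℕ) :
    2 * (runs N 1 k).length = k * N + if k % 2 = 1 ∧ N % 2 = 1 then 1 else 0 := by
  induction k with
  | zero => simp [runs]
  | succ k ih =>
    rw [runs, range'_1_concat, flatMap_append, ← runs, length_append, flatMap_singleton,
      length_zigzagRun, add_mul, one_mul]
    split_ifs at ih ⊢ <;> omega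

theorem length_zigzagWord (n : ℕ) : (zigzagWord n).length = n * (n + 1) / 2 := by
  have h := length_runs_one (n + 1) n
  rw [if_neg (by omega)] at h
  rw [zigzagWord]
  omega

theorem mem_zigzagWord {n x : ℕ} (hx : x ∈ zigzagWord n) : 1 ≤ x ∧ x ≤ n + 1 := by
  obtain ⟨j, -, hx⟩ := mem_flatMap.1 hx
  exact (mem_zigzagRun.1 hx).imp_right And.left

def gap (a b : ℕ) : ℕ := if a % 2 ≠ b % 2 then 1 else if RunLT a a b then 0 else 2

def gapSum : ℕ → List ℕ → ℕ
  | _, [] => 0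
  | a, b :: q => gap a b + gapSum b q

theorem cons_sublist_runFrom_append_runs {N : ℕ} (q : List ℕ) {a j k : ℕ}
    (hmem : ∀ b ∈ a :: q, 1 ≤ b ∧ b ≤ N) (hne : (a :: q).IsChain (· ≠ ·))
    (hj : j % 2 = a % 2) (hk : gapSum a q ≤ k) :
    a :: q <+ runFrom N j a ++ runs N (j + 1) k := by
  induction q generalizing a j k with
  | nil =>
    obtain ⟨ha1, haN⟩ := hmem a mem_cons_self
    rw [runFrom_eq_cons (mem_zigzagRun.2 ⟨ha1, haN, hj.symm⟩), cons_append]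
    exact (nil_sublist _).cons_cons a
  | cons b q ih =>
    obtain ⟨ha1, haN⟩ := hmem a mem_cons_self
    obtain ⟨hab, hne⟩ := isChain_cons_cons.1 hne
    have hmem : ∀ c ∈ b :: q, 1 ≤ c ∧ c ≤ N := fun c hc => hmem c (mem_cons_of_mem a hc)
    have hk : gap a b + gapSum b q ≤ k := hk
    rw [runFrom_eq_cons (mem_zigzagRun.2 ⟨ha1, haN, hj.symm⟩), cons_append]
    refine Sublist.cons_cons a ?_
    by_cases hpar : a % 2 = b % 2
    · have hrun : RunLT j a b ↔ RunLT a a b := by simp only [RunLT, hj]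
      by_cases hlt : RunLT j a b
      · have hgap : gap a b = 0 := by simp [gap, hpar, ← hrun, hlt]
        exact (ih hmem hne (hj.trans hpar) (by omega)).trans
          ((runFrom_sublist_filter hlt).append_right _)
      · have hgap : gap a b = 2 := by simp [gap, hpar, ← hrun, hlt]
        obtain ⟨k, rfl⟩ : ∃ k', k = k' + 2 := ⟨k - 2, by omega⟩
        exact (ih hmem hne (by omega) (by omega)).trans <|
          ((runFrom_append_runs_sublist N (j + 2) b k).trans
            (runs_succ_sublist N (j + 1) (k + 1))).trans (sublist_append_right _ _)
    · have hgap : gap a b = 1 := by simp [gap, hpar]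
      obtain ⟨k, rfl⟩ : ∃ k', k = k' + 1 := ⟨k - 1, by omega⟩
      exact (ih hmem hne (by omega) (by omega)).trans <|
        (runFrom_append_runs_sublist N (j + 1) b k).trans (sublist_append_right _ _)

theorem gap_add_gap_succ {a b : ℕ} (hab : a ≠ b) : gap a b + gap (a + 1) (b + 1) = 2 := by
  unfold gap RunLT; split_ifs <;> omega

theorem gapSum_add_gapSum_map_succ (a : ℕ) (q : List ℕ) (hne : (a :: q).IsChain (· ≠ ·)) :
    gapSum a q + gapSum (a + 1) (q.map (· + 1)) = 2 * q.length := by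
  induction q generalizing a with
  | nil => rfl
  | cons b q ih =>
    obtain ⟨hab, hne⟩ := isChain_cons_cons.1 hne
    simp only [gapSum, map_cons, length_cons]
    have := gap_add_gap_succ hab
    have := ih b hne
    omega

def firstRun (a : ℕ) : ℕ := 2 - a % 2

def runsNeeded : List ℕ → ℕ
  | [] => 0
  | a :: q => firstRun a + gapSum a q

theorem runsNeeded_add_runsNeeded_map_succ {p : List ℕ} (hp : p ≠ []) (hne : p.IsChain (· ≠ ·)) :
    runsNeeded p + runsNeeded (p.map (· + 1)) = 2 * p.length + 1 := by
  obtain ⟨a, q, rfl⟩ := exists_cons_of_ne_nil hp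
  have := gapSum_add_gapSum_map_succ a q hne
  simp only [runsNeeded, map_cons, length_cons, firstRun]
  omega

theorem sublist_zigzagWord_of_runsNeeded_le {n : ℕ} {p : List ℕ} (hmem : ∀ b ∈ p, 1 ≤ b ∧ b ≤ n + 1)
    (hne : p.IsChain (· ≠ ·)) (hruns : runsNeeded p ≤ n) : p <+ zigzagWord n := by
  rcases p with _ | ⟨a, q⟩
  · exact nil_sublist _
  have hruns : firstRun a + gapSum a q ≤ n := hruns
  have hj : 1 ≤ firstRun a ∧ firstRun a % 2 = a % 2 := by unfold firstRun; omega
  have hword : runs (n + 1) (firstRun a) (n - firstRun a + 1) <+ zigzagWord n := by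
    have := runs_add_sublist (n + 1) 1 (firstRun a - 1) (n - firstRun a + 1)
    rwa [show 1 + (firstRun a - 1) = firstRun a by omega,
      show firstRun a - 1 + (n - firstRun a + 1) = n by omega] at this
  exact (cons_sublist_runFrom_append_runs q hmem hne hj.2 (by omega)).trans
    ((runFrom_append_runs_sublist _ _ _ _).trans hword)

theorem exists_map_add_sublist_zigzagWord {n : ℕ} {p : List ℕ} (hp : IsPermWord n p) :
    ∃ c, p.map (· + c) <+ zigzagWord n := by
  obtain ⟨hlen, hnodup, hmem⟩ := hp
  have hne : p.IsChain (· ≠ ·) := hnodup.isChain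
  by_cases hruns : runsNeeded p ≤ n
  · have hmem : ∀ b ∈ p, 1 ≤ b ∧ b ≤ n + 1 := fun b hb => (hmem b hb).imp_right Nat.le_succ_of_le
    exact ⟨0, by simpa using sublist_zigzagWord_of_runsNeeded_le hmem hne hruns⟩
  · have hp : p ≠ [] := by rintro rfl; exact hruns (Nat.zero_le n)
    refine ⟨1, sublist_zigzagWord_of_runsNeeded_le ?_ ?_ ?_⟩
    · exact forall_mem_map.2 fun b hb => by have := hmem b hb; omega
    · exact isChain_map_of_isChain _ (fun a b h => by omega) hne
    · have := runsNeeded_add_runsNeeded_map_succ hp hne; omega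

theorem ordIso_map_add (p : List ℕ) (c : ℕ) : OrdIso (p.map (· + c)) p := by
  refine ⟨length_map _, fun i j hi hj => ?_⟩
  rw [length_map] at hi hj
  simp [getElem?_eq_getElem hi, getElem?_eq_getElem hj]

end Zigzag

theorem miller_upper_bound (n : Nat) :
    ∃ w : List Nat, (∀ x ∈ w, 1 ≤ x ∧ x ≤ n + 1) ∧ w.length = n * (n + 1) / 2 ∧
      ∀ p : List Nat, IsPermWord n p → ∃ u : List Nat, List.Sublist u w ∧ OrdIso u p := by
  refine ⟨Zigzag.zigzagWord n, fun _ => Zigzag.mem_zigzagWord, Zigzag.length_zigzagWord n,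
    fun p hp => ?_⟩
  obtain ⟨c, hc⟩ := Zigzag.exists_map_add_sublist_zigzagWord hp
  exact ⟨_, hc, Zigzag.ordIso_map_add p c⟩
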